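/- Let γ be a gauge on a real vector space X and let X₀ be a finite-dimensional linear subspace of X. Then X₀ is sequentially closed with respect to γ-convergence: if (x_n) is a sequence in X₀ and x₀ ∈ X with γ(x_n − x₀) → 0, then x₀ ∈ X₀. -/

import Mathlib

/-!
A gauge is convex, hence continuous on any finite-dimensional normed space, and being positive
away from `0` it is bounded below by a multiple of the norm (compactness of the unit sphere). So on
the finite-dimensional span `Y` of `X₀` and `x₀`, `γ`-convergence is norm convergence, and `X₀` is
closed in `Y`.
-/

open Filter Topology

/-- A gauge on a real vector space: nonnegative, vanishing exactly at `0`,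
positively homogeneous, and subadditive. -/
def IsGauge {X : Type*} [AddCommGroup X] [Module ℝ X] (γ : X → ℝ) : Prop :=
  (∀ x, 0 ≤ γ x) ∧ (∀ x, γ x = 0 ↔ x = 0) ∧
    (∀ (l : ℝ) (x : X), 0 < l → γ (l • x) = l * γ x) ∧
    (∀ x y, γ (x + y) ≤ γ x + γ y)

namespace IsGauge

section

variable {X : Type*} [AddCommGroup X] [Module ℝ X] {γ : X → ℝ}

lemma map_zero (hγ : IsGauge γ) : γ 0 = 0 :=
  (hγ.2.1 0).mpr rfl

lemma pos_of_ne_zero (hγ : IsGauge γ) {x : X} (hx : x ≠ 0) : 0 < γ x :=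
  (hγ.1 x).lt_of_ne fun h => hx ((hγ.2.1 x).mp h.symm)

lemma map_smul_of_nonneg (hγ : IsGauge γ) {t : ℝ} (ht : 0 ≤ t) (x : X) :
    γ (t • x) = t * γ x := by
  rcases ht.eq_or_lt with rfl | ht
  · simp [hγ.map_zero]
  · exact hγ.2.2.1 t x ht

lemma comp_linearMap {E : Type*} [AddCommGroup E] [Module ℝ E] (hγ : IsGauge γ)
    (f : E →ₗ[ℝ] X) (hf : Function.Injective f) : IsGauge (γ ∘ f) := by
  refine ⟨fun u => hγ.1 _, fun u => ?_, fun t u ht => ?_, fun u v => ?_⟩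
  · rw [Function.comp_apply, hγ.2.1, map_eq_zero_iff f hf]
  · simp only [Function.comp_apply, map_smul, hγ.2.2.1 t _ ht]
  · simpa only [Function.comp_apply, map_add] using hγ.2.2.2 (f u) (f v)

lemma convexOn (hγ : IsGauge γ) : ConvexOn ℝ Set.univ γ := by
  refine ⟨convex_univ, fun x _ y _ a b ha hb _ => ?_⟩
  calc γ (a • x + b • y) ≤ γ (a • x) + γ (b • y) := hγ.2.2.2 _ _
    _ = a • γ x + b • γ y := by
      rw [hγ.map_smul_of_nonneg ha, hγ.map_smul_of_nonneg hb, smul_eq_mul, smul_eq_mul]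

end

section

variable {E : Type*} [NormedAddCommGroup E] [NormedSpace ℝ E] [FiniteDimensional ℝ E]
  {γ : E → ℝ}

lemma continuous (hγ : IsGauge γ) : Continuous γ :=
  continuousOn_univ.mp (hγ.convexOn.continuousOn isOpen_univ)

lemma exists_pos_mul_norm_le (hγ : IsGauge γ) : ∃ c > 0, ∀ u, c * ‖u‖ ≤ γ u := by
  rcases subsingleton_or_nontrivial E with hE | hE
  · exact ⟨1, one_pos, fun u => by simpa [Subsingleton.elim u 0] using hγ.1 0⟩
  obtain ⟨u₀, hu₀_mem, hmin⟩ := (isCompact_sphere (0 : E) 1).exists_isMinOn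
    (NormedSpace.sphere_nonempty.mpr zero_le_one) hγ.continuous.continuousOn
  have hu₀ : ‖u₀‖ = 1 := mem_sphere_zero_iff_norm.mp hu₀_mem
  refine ⟨γ u₀, hγ.pos_of_ne_zero (norm_ne_zero_iff.mp (by simp [hu₀])), fun u => ?_⟩
  rcases eq_or_ne u 0 with rfl | hu
  · simp [hγ.map_zero]
  have hn : 0 < ‖u‖ := norm_pos_iff.mpr hu
  have hsphere : ‖u‖⁻¹ • u ∈ Metric.sphere (0 : E) 1 := by
    simp [norm_smul, hn.ne']
  calc γ u₀ * ‖u‖ ≤ γ (‖u‖⁻¹ • u) * ‖u‖ := by gcongr; exact hmin hsphere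
    _ = γ u := by
      rw [hγ.map_smul_of_nonneg (inv_nonneg.mpr hn.le)]
      field_simp

lemma tendsto_of_tendsto_sub {ι : Type*} {l : Filter ι} (hγ : IsGauge γ) {z : ι → E} {w : E}
    (h : Tendsto (fun n => γ (z n - w)) l (𝓝 0)) : Tendsto z l (𝓝 w) := by
  obtain ⟨c, hc, hle⟩ := hγ.exists_pos_mul_norm_le
  rw [tendsto_iff_norm_sub_tendsto_zero]
  refine squeeze_zero (fun n => norm_nonneg _) (fun n => ?_) (by simpa using h.const_mul c⁻¹)
  exact (le_inv_mul_iff₀ hc).mpr (hle _)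

lemma mem_of_tendsto_sub {ι : Type*} {l : Filter ι} [l.NeBot] (hγ : IsGauge γ)
    (W : Submodule ℝ E) {z : ι → E} {w : E} (hz : ∀ n, z n ∈ W)
    (h : Tendsto (fun n => γ (z n - w)) l (𝓝 0)) : w ∈ W :=
  W.closed_of_finiteDimensional.mem_of_tendsto (hγ.tendsto_of_tendsto_sub h)
    (Eventually.of_forall hz)

end

end IsGauge

theorem stmt_9 {X : Type*} [AddCommGroup X] [Module ℝ X]
    (γ : X → ℝ) (hγ : IsGauge γ)
    (X₀ : Submodule ℝ X) (hfd : FiniteDimensional ℝ X₀)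
    (x : ℕ → X) (x₀ : X) (hmem : ∀ n : ℕ, x n ∈ X₀)
    (hconv : Tendsto (fun n => γ (x n - x₀)) atTop (𝓝 0)) :
    x₀ ∈ X₀ := by
  set Y := X₀ ⊔ Submodule.span ℝ {x₀}
  have hxY (n : ℕ) : x n ∈ Y := Submodule.mem_sup_left (hmem n)
  have hx₀Y : x₀ ∈ Y := Submodule.mem_sup_right (Submodule.mem_span_singleton_self x₀)
  let e := (Module.finBasis ℝ Y).equivFun
  let f := Y.subtype ∘ₗ e.symm.toLinearMap
  have hf : Function.Injective f := Y.injective_subtype.comp e.symm.injective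
  have hfe (y : X) (hy : y ∈ Y) : f (e ⟨y, hy⟩) = y := by simp [f]
  have hx₀W := (hγ.comp_linearMap f hf).mem_of_tendsto_sub (X₀.comap f)
    (z := fun n => e ⟨x n, hxY n⟩) (w := e ⟨x₀, hx₀Y⟩) (fun n => by simp [hfe, hmem])
    (by simpa [hfe] using hconv)
  simpa [hfe] using hx₀W
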